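/- arXiv:1010.0380 — 2 statements merged into one kernel-verified Lean document; each statement's English description precedes it below -/
import Mathlib

section
/- Let S be an operator system, E a finite-dimensional operator system with Archimedean matrix order unit on its dual E* (so E* is an operator system), and Φ : S → E a unital completely positive map. Then the functional φ on S ⊗_max E* defined by φ(x ⊗ f) = f(Φ(x)) is positive. -/
open scoped TensorProduct Kronecker ComplexOrder Matrix

noncomputable section

/-- Conjugation `α X α*` of an operator-valued matrix by a scalar matrix. -/
def mconj {V : Type} [AddCommGroup V] [Module ℂ V] {m n : Type} [Fintype m]
    (α : Matrix n m ℂ) (X : Matrix m m V) : Matrix n n V :=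
  Matrix.of fun i j => ∑ k, ∑ l, (α i k * star (α j l)) • X k l

/-- Entrywise star (conjugate transpose) of an operator-valued matrix. -/
def mstar {V : Type} [AddCommGroup V] [StarAddMonoid V] {m n : Type}
    (X : Matrix m n V) : Matrix n m V :=
  Matrix.of fun i j => star (X j i)

/-- An abstract operator system: a matrix ordered complex ∗-vector space with an
Archimedean matrix order unit (Choi–Effros). -/
structure OpSys (V : Type) [AddCommGroup V] [Module ℂ V] [StarAddMonoid V]
    [StarModule ℂ V] : Type 1 where
  pos : ∀ (ι : Type) [Fintype ι] [DecidableEq ι], Set (Matrix ι ι V)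
  unit : V
  unit_star : star unit = unit
  pos_star : ∀ (ι : Type) [Fintype ι] [DecidableEq ι] (X : Matrix ι ι V),
    X ∈ pos ι → mstar X = X
  pos_add : ∀ (ι : Type) [Fintype ι] [DecidableEq ι] (X Y : Matrix ι ι V),
    X ∈ pos ι → Y ∈ pos ι → X + Y ∈ pos ι
  pos_conj : ∀ (ι κ : Type) [Fintype ι] [DecidableEq ι] [Fintype κ] [DecidableEq κ]
    (α : Matrix κ ι ℂ) (X : Matrix ι ι V), X ∈ pos ι → mconj α X ∈ pos κ
  unit_pos : ∀ (ι : Type) [Fintype ι] [DecidableEq ι],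
    Matrix.diagonal (fun _ => unit) ∈ pos ι
  archimedean : ∀ (ι : Type) [Fintype ι] [DecidableEq ι] (X : Matrix ι ι V),
    mstar X = X →
    (∀ ε : ℝ, 0 < ε → X + (ε : ℂ) • Matrix.diagonal (fun _ => unit) ∈ pos ι) →
    X ∈ pos ι
  order_unit : ∀ (ι : Type) [Fintype ι] [DecidableEq ι] (X : Matrix ι ι V),
    mstar X = X → ∃ r : ℝ, 0 < r ∧
      (r : ℂ) • Matrix.diagonal (fun _ => unit) - X ∈ pos ι
  proper : ∀ x : V, Matrix.of (fun _ _ : Fin 1 => x) ∈ pos (Fin 1) →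
    Matrix.of (fun _ _ : Fin 1 => -x) ∈ pos (Fin 1) → x = 0

variable {V W : Type}

/-- The matrix norms of an operator system, described as a predicate `‖X‖ ≤ r`,
determined by the order structure via `2×2` block matrices. -/
def OpSys.normLE [AddCommGroup V] [Module ℂ V] [StarAddMonoid V] [StarModule ℂ V]
    (𝒮 : OpSys V) {ι κ : Type} [Fintype ι] [DecidableEq ι] [Fintype κ] [DecidableEq κ]
    (X : Matrix ι κ V) (r : ℝ) : Prop :=
  Matrix.fromBlocks ((r : ℂ) • Matrix.diagonal (fun _ => 𝒮.unit)) X (mstar X)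
    ((r : ℂ) • Matrix.diagonal (fun _ => 𝒮.unit)) ∈ 𝒮.pos (ι ⊕ κ)

/-- The norm of a single element of an operator system. -/
def OpSys.elemNormLE [AddCommGroup V] [Module ℂ V] [StarAddMonoid V] [StarModule ℂ V]
    (𝒮 : OpSys V) (x : V) (r : ℝ) : Prop :=
  𝒮.normLE (Matrix.of fun _ _ : Fin 1 => x) r

/-- Completeness of the norm of an operator system. -/
def OpSys.CompleteNorms [AddCommGroup V] [Module ℂ V] [StarAddMonoid V] [StarModule ℂ V]
    (𝒮 : OpSys V) : Prop :=
  ∀ u : ℕ → V,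
    (∀ ε : ℝ, 0 < ε → ∃ N : ℕ, ∀ p ≥ N, ∀ q ≥ N, 𝒮.elemNormLE (u p - u q) ε) →
    ∃ x : V, ∀ ε : ℝ, 0 < ε → ∃ N : ℕ, ∀ p ≥ N, 𝒮.elemNormLE (u p - x) ε

section Maps

variable [AddCommGroup V] [Module ℂ V] [StarAddMonoid V] [StarModule ℂ V]
variable [AddCommGroup W] [Module ℂ W] [StarAddMonoid W] [StarModule ℂ W]

/-- Completely positive map between operator systems. -/
def IsCPmap (𝒮 : OpSys V) (𝒯 : OpSys W) (Φ : V →ₗ[ℂ] W) : Prop :=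
  ∀ (ι : Type) [Fintype ι] [DecidableEq ι], ∀ X ∈ 𝒮.pos ι, X.map Φ ∈ 𝒯.pos ι

/-- Unital completely positive map between operator systems. -/
def IsUCPmap (𝒮 : OpSys V) (𝒯 : OpSys W) (Φ : V →ₗ[ℂ] W) : Prop :=
  Φ 𝒮.unit = 𝒯.unit ∧ IsCPmap 𝒮 𝒯 Φ

/-- (Unital) complete order embedding between operator systems. -/
def IsCOEmbedding (𝒮 : OpSys V) (𝒯 : OpSys W) (Φ : V →ₗ[ℂ] W) : Prop :=
  Φ 𝒮.unit = 𝒯.unit ∧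
  ∀ (ι : Type) [Fintype ι] [DecidableEq ι], ∀ X : Matrix ι ι V,
    X ∈ 𝒮.pos ι ↔ X.map Φ ∈ 𝒯.pos ι

/-- Complete order quotient map between operator systems: a unital completely positive
surjection such that every positive `Q` admits, for every `ε > 0`, a lift `P` with
`P + ε Iₙ ⊗ 1` positive. -/
def IsCOQuotientMap (𝒮 : OpSys V) (𝒯 : OpSys W) (Φ : V →ₗ[ℂ] W) : Prop :=
  IsUCPmap 𝒮 𝒯 Φ ∧ Function.Surjective Φ ∧
  ∀ (ι : Type) [Fintype ι] [DecidableEq ι], ∀ Q ∈ 𝒯.pos ι, ∀ ε : ℝ, 0 < ε →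
    ∃ P : Matrix ι ι V,
      P + (ε : ℂ) • Matrix.diagonal (fun _ => 𝒮.unit) ∈ 𝒮.pos ι ∧ P.map Φ = Q

end Maps

section Tensor

variable [AddCommGroup V] [Module ℂ V] [AddCommGroup W] [Module ℂ W]

/-- Elementary tensor of operator-valued matrices. -/
def tkron {ι κ : Type} (P : Matrix ι ι V) (Q : Matrix κ κ W) :
    Matrix (ι × κ) (ι × κ) (V ⊗[ℂ] W) :=
  Matrix.of fun p q => P p.1 q.1 ⊗ₜ[ℂ] Q p.2 q.2

/-- The cone `D_n^{max}` : all `α (P ⊗ Q) α*`. -/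
def Dmax (posV : ∀ (ι : Type) [Fintype ι] [DecidableEq ι], Set (Matrix ι ι V))
    (posW : ∀ (ι : Type) [Fintype ι] [DecidableEq ι], Set (Matrix ι ι W))
    (ι : Type) [Fintype ι] [DecidableEq ι] : Set (Matrix ι ι (V ⊗[ℂ] W)) :=
  { Z | ∃ (k l : ℕ) (P : Matrix (Fin k) (Fin k) V) (Q : Matrix (Fin l) (Fin l) W)
      (α : Matrix ι (Fin k × Fin l) ℂ),
      P ∈ posV (Fin k) ∧ Q ∈ posW (Fin l) ∧ Z = mconj α (tkron P Q) }

/-- The positive cones of the maximal operator system tensor product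
(the Archimedeanization of `D^{max}`). -/
def maxPos (posV : ∀ (ι : Type) [Fintype ι] [DecidableEq ι], Set (Matrix ι ι V)) (uV : V)
    (posW : ∀ (ι : Type) [Fintype ι] [DecidableEq ι], Set (Matrix ι ι W)) (uW : W)
    (ι : Type) [Fintype ι] [DecidableEq ι] : Set (Matrix ι ι (V ⊗[ℂ] W)) :=
  { Z | ∀ ε : ℝ, 0 < ε →
      Z + (ε : ℂ) • Matrix.diagonal (fun _ => uV ⊗ₜ[ℂ] uW) ∈ Dmax posV posW ι }

/-- The ground level positive cone of the maximal tensor product. -/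
def maxPos1 (posV : ∀ (ι : Type) [Fintype ι] [DecidableEq ι], Set (Matrix ι ι V)) (uV : V)
    (posW : ∀ (ι : Type) [Fintype ι] [DecidableEq ι], Set (Matrix ι ι W)) (uW : W) :
    Set (V ⊗[ℂ] W) :=
  { z | Matrix.of (fun _ _ : Fin 1 => z) ∈ maxPos posV uV posW uW (Fin 1) }

end Tensor

/-- Positivity in matrix algebras over a (C*-)algebra: elements of the form `Y* Y`. -/
def cstarPos {A : Type} [Ring A] [StarRing A] (ι : Type) [Fintype ι] :
    Set (Matrix ι ι A) :=
  { X | ∃ Y : Matrix ι ι A, X = Yᴴ * Y }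

/-- The dual space of an operator system. -/
abbrev DualV (V : Type) [AddCommGroup V] [Module ℂ V] := V →ₗ[ℂ] ℂ

/-- The double dual space. -/
abbrev BiDual (V : Type) [AddCommGroup V] [Module ℂ V] := DualV (DualV V)

section Dual

variable [AddCommGroup V] [Module ℂ V]

/-- Pairing of a matrix of functionals with an operator-valued matrix. -/
def ampMat {ι κ m : Type} (f : Matrix ι κ (DualV V)) (X : Matrix m m V) :
    Matrix (m × ι) (m × κ) ℂ :=
  Matrix.of fun p q => f p.2 q.2 (X p.1 q.1)

/-- The matrix ordering on the dual space: `Mₙ(S*)⁺ = CP(S, Mₙ)`. -/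
def dualPos (posV : ∀ (ι : Type) [Fintype ι] [DecidableEq ι], Set (Matrix ι ι V))
    (ι : Type) [Fintype ι] [DecidableEq ι] : Set (Matrix ι ι (DualV V)) :=
  { f | ∀ (m : Type) [Fintype m] [DecidableEq m], ∀ X ∈ posV m, (ampMat f X).PosSemidef }

/-- The matrix ordering on the double dual. -/
def bidualPos (posV : ∀ (ι : Type) [Fintype ι] [DecidableEq ι], Set (Matrix ι ι V))
    (ι : Type) [Fintype ι] [DecidableEq ι] : Set (Matrix ι ι (BiDual V)) :=
  { F | ∀ (κ : Type) [Fintype κ] [DecidableEq κ], ∀ f ∈ dualPos posV κ,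
      (Matrix.of fun (p q : ι × κ) => F p.1 q.1 (f p.2 q.2)).PosSemidef }

end Dual

/-- `‖M‖ ≤ r` for scalar matrices, via positivity of a `2×2` block matrix. -/
def cNormLE {ι κ : Type} [Fintype ι] [DecidableEq ι] [Fintype κ] [DecidableEq κ]
    (M : Matrix ι κ ℂ) (r : ℝ) : Prop :=
  (Matrix.fromBlocks ((r : ℂ) • 1) M Mᴴ ((r : ℂ) • 1)).PosSemidef

section DualNorm

/-- The matrix norm data of an operator system, in partially applicable form. -/
def OpSys.normData [AddCommGroup V] [Module ℂ V] [StarAddMonoid V] [StarModule ℂ V]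
    (𝒮 : OpSys V) (ι κ : Type) [Fintype ι] [DecidableEq ι] [Fintype κ] [DecidableEq κ] :
    Matrix ι κ V → ℝ → Prop :=
  fun X r => 𝒮.normLE X r

/-- The matrix cones of matrices over a C*-algebra, in partially applicable form. -/
def cstarPosData (A : Type) [Ring A] [StarRing A]
    (ι : Type) [Fintype ι] [DecidableEq ι] : Set (Matrix ι ι A) :=
  cstarPos ι

/-- The completely bounded norm (as a predicate `‖f‖_cb ≤ r`) on matrices over the
dual of a space with matrix norm data `normV`; this is the operator space dual
matrix norm. -/
def dualNormLE [AddCommGroup V] [Module ℂ V]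
    (normV : ∀ (ι κ : Type) [Fintype ι] [DecidableEq ι] [Fintype κ] [DecidableEq κ],
      Matrix ι κ V → ℝ → Prop)
    (ι κ : Type) [Fintype ι] [DecidableEq ι] [Fintype κ] [DecidableEq κ]
    (f : Matrix ι κ (DualV V)) (r : ℝ) : Prop :=
  ∀ (m : Type) [Fintype m] [DecidableEq m], ∀ X : Matrix m m V,
    normV m m X 1 → cNormLE (ampMat f X) r

end DualNorm

section Werner

variable {U : Type} [AddCommGroup U] [Module ℂ U]

/-- Werner's unitization cone on `U ⊕ ℂ` for a matrix ordered operator space `U`,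
given by the matrix cones `posU` and matrix norms `normU` of `U` :
`X + A ∈ Mₙ(Ũ)⁺` iff `A ∈ Mₙ⁺` and
`φ((A+εIₙ)^{-1/2} X (A+εIₙ)^{-1/2}) ≥ -1` for every `ε > 0` and every positive
contractive functional `φ` on `Mₙ(U)`. -/
def wernerPos (posU : ∀ (ι : Type) [Fintype ι] [DecidableEq ι], Set (Matrix ι ι U))
    (normU : ∀ (ι κ : Type) [Fintype ι] [DecidableEq ι] [Fintype κ] [DecidableEq κ],
      Matrix ι κ U → ℝ → Prop)
    (ι : Type) [Fintype ι] [DecidableEq ι] : Set (Matrix ι ι (U × ℂ)) :=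
  { X | (Matrix.of fun i j => (X i j).2).PosSemidef ∧
      ∀ ε : ℝ, 0 < ε → ∀ B : Matrix ι ι ℂ, B.PosDef →
        B * B = Matrix.of (fun i j => (X i j).2) + (ε : ℂ) • 1 →
        ∀ φ : Matrix ι ι U →ₗ[ℂ] ℂ,
          (∀ g ∈ posU ι, 0 ≤ (φ g).re ∧ (φ g).im = 0) →
          (∀ (g : Matrix ι ι U) (r : ℝ), 0 ≤ r → normU ι ι g r → ‖φ g‖ ≤ r) →
          -1 ≤ (φ (mconj B⁻¹ (Matrix.of fun i j => (X i j).1))).re }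

end Werner

section MatrixMaps

variable [AddCommGroup V] [Module ℂ V] [AddCommGroup W] [Module ℂ W]

/-- Amplification of a matrix-algebra valued map evaluated on an operator matrix. -/
def blkMat {p : Type} (φ : V →ₗ[ℂ] Matrix p p ℂ) {ι : Type} (X : Matrix ι ι V) :
    Matrix (ι × p) (ι × p) ℂ :=
  Matrix.of fun q r => φ (X q.1 r.1) q.2 r.2

/-- Unital completely positive map into a matrix algebra, for raw matrix-cone data. -/
def UCPtoM {R : Type} [AddCommGroup R] [Module ℂ R]
    (posR : ∀ (ι : Type) [Fintype ι] [DecidableEq ι], Set (Matrix ι ι R)) (uR : R)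
    {p : Type} [Fintype p] [DecidableEq p] (φ : R →ₗ[ℂ] Matrix p p ℂ) : Prop :=
  φ uR = 1 ∧ ∀ (ι : Type) [Fintype ι] [DecidableEq ι], ∀ X ∈ posR ι, (blkMat φ X).PosSemidef

/-- Completely positive map from a matrix algebra into matrix-cone data. -/
def CPfromM {p : Type} [Fintype p] [DecidableEq p]
    (posW : ∀ (ι : Type) [Fintype ι] [DecidableEq ι], Set (Matrix ι ι W))
    (ψ : Matrix p p ℂ →ₗ[ℂ] W) : Prop :=
  ∀ (ι : Type) [Fintype ι] [DecidableEq ι] (B : Matrix ι ι (Matrix p p ℂ)),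
    (Matrix.of fun (q r : ι × p) => B q.1 r.1 q.2 r.2).PosSemidef →
    (Matrix.of fun i j => ψ (B i j)) ∈ posW ι

/-- The pairing `φ ⊗ ψ : V ⊗ W → M_{p×q}` associated with matrix-algebra valued maps. -/
def kronPair {p q : Type} [Fintype p] [DecidableEq p] [Fintype q] [DecidableEq q]
    (φ : V →ₗ[ℂ] Matrix p p ℂ) (ψ : W →ₗ[ℂ] Matrix q q ℂ) :
    V ⊗[ℂ] W →ₗ[ℂ] Matrix (p × q) (p × q) ℂ :=
  TensorProduct.lift
    (LinearMap.mk₂ ℂ (fun v w => φ v ⊗ₖ ψ w)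
      (fun v v' w => by simp [map_add, Matrix.add_kronecker])
      (fun c v w => by simp [map_smul, Matrix.smul_kronecker])
      (fun v w w' => by simp [map_add, Matrix.kronecker_add])
      (fun c v w => by simp [map_smul, Matrix.kronecker_smul]))

/-- The ground level positive cone of the minimal operator system tensor product. -/
def minPos1 (posV : ∀ (ι : Type) [Fintype ι] [DecidableEq ι], Set (Matrix ι ι V)) (uV : V)
    (posW : ∀ (ι : Type) [Fintype ι] [DecidableEq ι], Set (Matrix ι ι W)) (uW : W) :
    Set (V ⊗[ℂ] W) :=
  { z | ∀ (k m : ℕ) (φ : V →ₗ[ℂ] Matrix (Fin k) (Fin k) ℂ)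
      (ψ : W →ₗ[ℂ] Matrix (Fin m) (Fin m) ℂ),
      UCPtoM posV uV φ → UCPtoM posW uW ψ → (kronPair φ ψ z).PosSemidef }

/-- The matrix level positive cones of the minimal operator system tensor product. -/
def minPosMat (posV : ∀ (ι : Type) [Fintype ι] [DecidableEq ι], Set (Matrix ι ι V)) (uV : V)
    (posW : ∀ (ι : Type) [Fintype ι] [DecidableEq ι], Set (Matrix ι ι W)) (uW : W)
    (ι : Type) [Fintype ι] [DecidableEq ι] : Set (Matrix ι ι (V ⊗[ℂ] W)) :=
  { Z | ∀ (k m : ℕ) (φ : V →ₗ[ℂ] Matrix (Fin k) (Fin k) ℂ)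
      (ψ : W →ₗ[ℂ] Matrix (Fin m) (Fin m) ℂ),
      UCPtoM posV uV φ → UCPtoM posW uW ψ →
      (Matrix.of fun (q r : ι × (Fin k × Fin m)) =>
        kronPair φ ψ (Z q.1 r.1) q.2 r.2).PosSemidef }

/-- The entry functionals of a matrix-algebra valued map. -/
def entryF {p : Type} (f : V →ₗ[ℂ] Matrix p p ℂ) (i j : p) : DualV V where
  toFun x := f x i j
  map_add' x y := by simp [map_add, Matrix.add_apply]
  map_smul' c x := by simp [map_smul, Matrix.smul_apply]

/-- Conjugation of a matrix-algebra valued map by a fixed scalar matrix. -/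
def conjMap {p : Type} [Fintype p] (B : Matrix p p ℂ) (f : V →ₗ[ℂ] Matrix p p ℂ) :
    V →ₗ[ℂ] Matrix p p ℂ where
  toFun x := B * f x * B
  map_add' x y := by simp [map_add, Matrix.mul_add, Matrix.add_mul]
  map_smul' c x := by simp [map_smul, Matrix.mul_smul, Matrix.smul_mul]

end MatrixMaps

/-- The weak expectation property, for raw matrix-cone data `(posV, uV)` on `V` :
the canonical inclusion into the bidual factors through some `B(H)`
(`H = ℓ²(Λ)`) by unital completely positive maps. -/
def HasWEP {V : Type} [AddCommGroup V] [Module ℂ V]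
    (posV : ∀ (ι : Type) [Fintype ι] [DecidableEq ι], Set (Matrix ι ι V)) (uV : V) : Prop :=
  ∃ (Λ : Type) (Φ : V →ₗ[ℂ] ((lp (fun _ : Λ => ℂ) 2) →L[ℂ] (lp (fun _ : Λ => ℂ) 2)))
    (Ψ : ((lp (fun _ : Λ => ℂ) 2) →L[ℂ] (lp (fun _ : Λ => ℂ) 2)) →ₗ[ℂ] BiDual V),
    Φ uV = 1 ∧
    (∀ (ι : Type) [Fintype ι] [DecidableEq ι], ∀ X ∈ posV ι, X.map Φ ∈ cstarPos ι) ∧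
    Ψ 1 = Module.Dual.eval ℂ V uV ∧
    (∀ (ι : Type) [Fintype ι] [DecidableEq ι],
      ∀ Y ∈ cstarPos (A := (lp (fun _ : Λ => ℂ) 2) →L[ℂ] (lp (fun _ : Λ => ℂ) 2)) ι,
        Y.map Ψ ∈ bidualPos posV ι) ∧
    (∀ x : V, Ψ (Φ x) = Module.Dual.eval ℂ V x)

end

section Pairing

open Filter Topology

lemma Complex.nonneg_of_forall_pos_add_mul_nonneg {a c : ℂ}
    (h : ∀ ε : ℝ, 0 < ε → 0 ≤ a + ε * c) : 0 ≤ a := by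
  have hlim : Tendsto (fun ε : ℝ => a + ε * c) (𝓝[>] 0) (𝓝 a) := by
    have hcont : Continuous fun ε : ℝ => a + ε * c := by fun_prop
    simpa using (hcont.tendsto 0).mono_left nhdsWithin_le_nhds
  exact ge_of_tendsto hlim (eventually_nhdsWithin_of_forall h)

variable {V W E : Type} [AddCommGroup V] [Module ℂ V] [AddCommGroup W] [Module ℂ W]
  [AddCommGroup E] [Module ℂ E]

lemma nonneg_of_mem_maxPos1
    {posV : ∀ (ι : Type) [Fintype ι] [DecidableEq ι], Set (Matrix ι ι V)} {uV : V}
    {posW : ∀ (ι : Type) [Fintype ι] [DecidableEq ι], Set (Matrix ι ι W)} {uW : W}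
    (L : V ⊗[ℂ] W →ₗ[ℂ] ℂ) (hL : ∀ Z ∈ Dmax posV posW (Fin 1), 0 ≤ L (Z 0 0))
    {z : V ⊗[ℂ] W} (hz : z ∈ maxPos1 posV uV posW uW) : 0 ≤ L z := by
  refine Complex.nonneg_of_forall_pos_add_mul_nonneg (c := L (uV ⊗ₜ uW)) fun ε hε => ?_
  simpa using hL _ (hz ε hε)

lemma lift_eval_comp_mconj_tkron_apply (Φ : V →ₗ[ℂ] E) {ι m n : Type} [Fintype m] [Fintype n]
    (α : Matrix ι (m × n) ℂ) (P : Matrix m m V) (Q : Matrix n n (DualV E)) (i : ι) :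
    TensorProduct.lift ((Module.Dual.eval ℂ E).comp Φ) (mconj α (tkron P Q) i i) =
      α i ⬝ᵥ ampMat Q (P.map Φ) *ᵥ star (α i) := by
  simp only [mconj, tkron, ampMat, Matrix.of_apply, map_sum, map_smul, smul_eq_mul,
    TensorProduct.lift.tmul, LinearMap.coe_comp, Function.comp_apply,
    Module.Dual.eval_apply, dotProduct, Matrix.mulVec, Pi.star_apply, Matrix.map_apply,
    Finset.mul_sum]
  refine Finset.sum_congr rfl fun p _ => Finset.sum_congr rfl fun q _ => ?_
  ring

lemma lift_eval_comp_nonneg_of_mem_Dmax [StarAddMonoid V] [StarModule ℂ V]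
    [StarAddMonoid E] [StarModule ℂ E] {𝒮 : OpSys V} {ℰ : OpSys E} {Φ : V →ₗ[ℂ] E}
    (hΦ : IsCPmap 𝒮 ℰ Φ) {ι : Type} [Fintype ι] [DecidableEq ι]
    {Z : Matrix ι ι (V ⊗[ℂ] DualV E)} (hZ : Z ∈ Dmax 𝒮.pos (dualPos ℰ.pos) ι) (i : ι) :
    0 ≤ TensorProduct.lift ((Module.Dual.eval ℂ E).comp Φ) (Z i i) := by
  obtain ⟨k, l, P, Q, α, hP, hQ, rfl⟩ := hZ
  rw [lift_eval_comp_mconj_tkron_apply]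
  simpa using (hQ _ _ (hΦ _ P hP)).dotProduct_mulVec_nonneg (star (α i))

end Pairing

theorem pairing_functional_positive_general {V E : Type}
    [AddCommGroup V] [Module ℂ V] [StarAddMonoid V] [StarModule ℂ V]
    [AddCommGroup E] [Module ℂ E] [StarAddMonoid E] [StarModule ℂ E]
    [StarAddMonoid (DualV E)] [StarModule ℂ (DualV E)]
    (𝒮 : OpSys V) (ℰ : OpSys E) (𝒟 : OpSys (DualV E))
    (hdual : ∀ (ι : Type) [Fintype ι] [DecidableEq ι], 𝒟.pos ι = dualPos ℰ.pos ι)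
    (Φ : V →ₗ[ℂ] E) (hΦ : IsUCPmap 𝒮 ℰ Φ) :
    ∀ z ∈ maxPos1 𝒮.pos 𝒮.unit 𝒟.pos 𝒟.unit,
      0 ≤ ((TensorProduct.lift ((Module.Dual.eval ℂ E).comp Φ)) z).re ∧
        ((TensorProduct.lift ((Module.Dual.eval ℂ E).comp Φ)) z).im = 0 := by
  intro z hz
  have hD : 𝒟.pos = dualPos ℰ.pos := by
    funext ι _ _
    exact hdual ι
  rw [hD] at hz
  obtain ⟨hre, him⟩ := Complex.nonneg_iff.1 <|
    nonneg_of_mem_maxPos1 _ (fun Z hZ => lift_eval_comp_nonneg_of_mem_Dmax hΦ.2 hZ 0) hz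
  exact ⟨hre, him.symm⟩

/-- **Lemma (cf. [KPTT1, Lemma 5.7]).** Let `S` be an operator system, `E` a finite
dimensional operator system whose dual `E*` is endowed with a (non-canonical)
Archimedean matrix order unit making it an operator system `𝒟`, and `Φ : S → E` a
unital completely positive map.  Then the functional `φ` on `S ⊗_max E*` given by
`φ(x ⊗ f) = f(Φ(x))` is positive. -/
theorem pairing_functional_positive {V E : Type}
    [AddCommGroup V] [Module ℂ V] [StarAddMonoid V] [StarModule ℂ V]
    [AddCommGroup E] [Module ℂ E] [StarAddMonoid E] [StarModule ℂ E]
    [FiniteDimensional ℂ E]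
    [StarAddMonoid (DualV E)] [StarModule ℂ (DualV E)]
    (hst : ∀ (g : DualV E) (x : E), (star g) x = star (g (star x)))
    (𝒮 : OpSys V) (ℰ : OpSys E) (𝒟 : OpSys (DualV E))
    (hdual : ∀ (ι : Type) [Fintype ι] [DecidableEq ι], 𝒟.pos ι = dualPos ℰ.pos ι)
    (Φ : V →ₗ[ℂ] E) (hΦ : IsUCPmap 𝒮 ℰ Φ) :
    ∀ z ∈ maxPos1 𝒮.pos 𝒮.unit 𝒟.pos 𝒟.unit,
      0 ≤ ((TensorProduct.lift ((Module.Dual.eval ℂ E).comp Φ)) z).re ∧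
        ((TensorProduct.lift ((Module.Dual.eval ℂ E).comp Φ)) z).im = 0 :=
  pairing_functional_positive_general 𝒮 ℰ 𝒟 hdual Φ hΦ
end

section
/- Let Φ : S → T be a completely positive map between operator systems that factors as Φ = ψ ∘ φ with φ : S → M_p and ψ : M_p → T completely positive. Then the element of S* ⊗ T corresponding to Φ lies in the cone { α(f ⊗ Q)α* : α ∈ M_{1,pq}, f ∈ M_p(S*)^+, Q ∈ M_q(T)^+ }, and in particular Φ belongs to (S̃* ⊗_max T)^+. -/
open scoped TensorProduct Kronecker ComplexOrder Matrix

/-! Write `φ = [φᵢⱼ]` with `φᵢⱼ ∈ S*` and let `Q = [ψ(eᵢⱼ)]` be the Choi matrix of `ψ`, positive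
since `ψ` is completely positive. Then `Φ` corresponds to `∑ᵢⱼ φᵢⱼ ⊗ ψ(eᵢⱼ) = δ (F ⊗ Q) δ*`, where
`F = [φᵢⱼ] ∈ Mₚ(S*)⁺` and `δ = ∑ᵢ eᵢ ⊗ eᵢ` is the identity matrix flattened into a row.

For the maximal cone, adding `ε (0,1) ⊗ 1` amounts to replacing `F` and `Q` by the block-diagonal
`P = F ⊕ (0,1)` over `S̃*` and `Q ⊕ ε 1` over `T`. The matrix `P` is Werner-positive: its scalar
part is a positive projection, and its `S*` part remains in the dual cone under every congruence,
so Werner's condition `f(B⁻¹ P B⁻¹) ≥ -1` even holds with `0` in place of `-1`.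
-/

section Conjugation

variable {V W : Type} [AddCommGroup V] [Module ℂ V] [AddCommGroup W] [Module ℂ W]
variable {k m n : Type} [Fintype k] [Fintype m]

lemma mconj_mconj (α : Matrix n m ℂ) (β : Matrix m k ℂ) (X : Matrix k k V) :
    mconj α (mconj β X) = mconj (α * β) X := by
  ext i j
  simp only [mconj, Matrix.of_apply, Matrix.mul_apply, star_sum, star_mul', Finset.sum_mul,
    Finset.mul_sum, Finset.smul_sum, Finset.sum_smul, smul_smul]
  simp only [Finset.sum_comm (γ := m) (α := k)]
  refine Finset.sum_congr rfl fun c _ => Finset.sum_congr rfl fun d _ => ?_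
  rw [Finset.sum_comm]
  exact Finset.sum_congr rfl fun l _ => Finset.sum_congr rfl fun a _ => by ring_nf

lemma mconj_add (α : Matrix n m ℂ) (X Y : Matrix m m V) :
    mconj α (X + Y) = mconj α X + mconj α Y := by
  ext i j
  simp only [mconj, Matrix.of_apply, Matrix.add_apply, smul_add, Finset.sum_add_distrib]

@[simp]
lemma mconj_zero (α : Matrix n m ℂ) : mconj α (0 : Matrix m m V) = 0 := by
  ext i j
  simp [mconj]

@[simp]
lemma zero_mconj (X : Matrix m m V) : mconj (0 : Matrix n m ℂ) X = 0 := by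
  ext i j
  simp [mconj]

lemma mconj_smul_left (c : ℂ) (α : Matrix n m ℂ) (X : Matrix m m V) :
    mconj (c • α) X = (c * star c) • mconj α X := by
  ext i j
  simp only [mconj, Matrix.of_apply, Matrix.smul_apply, Finset.smul_sum,
    smul_smul, smul_eq_mul, star_mul']
  exact Finset.sum_congr rfl fun a _ => Finset.sum_congr rfl fun b _ => by ring_nf

@[simp]
lemma one_mconj [DecidableEq m] (X : Matrix m m V) : mconj (1 : Matrix m m ℂ) X = X := by
  ext i j
  simp [mconj, Matrix.one_apply]

lemma map_mconj (f : V →ₗ[ℂ] W) (α : Matrix n m ℂ) (X : Matrix m m V) :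
    (mconj α X).map f = mconj α (X.map f) := by
  ext i j
  simp [mconj]

lemma mconj_eq_mul_mul_conjTranspose (α : Matrix n m ℂ) (X : Matrix m m ℂ) :
    mconj α X = α * X * αᴴ := by
  ext i j
  simp only [mconj, Matrix.of_apply, Matrix.mul_apply, Matrix.conjTranspose_apply, smul_eq_mul,
    Finset.sum_mul]
  rw [Finset.sum_comm]
  exact Finset.sum_congr rfl fun a _ => Finset.sum_congr rfl fun b _ => by ring

lemma Matrix.PosSemidef.mconj [Fintype n] {X : Matrix m m ℂ} (hX : X.PosSemidef)
    (α : Matrix n m ℂ) :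
    (_root_.mconj α X).PosSemidef := by
  rw [mconj_eq_mul_mul_conjTranspose]
  exact hX.mul_mul_conjTranspose_same α

end Conjugation

section TensorConjugation

variable {V W : Type} [AddCommGroup V] [Module ℂ V] [AddCommGroup W] [Module ℂ W]
variable {k l k' l' : Type}

lemma tkron_add_left (X X' : Matrix k k V) (Y : Matrix l l W) :
    tkron (X + X') Y = tkron X Y + tkron X' Y := by
  ext p q
  simp [tkron, TensorProduct.add_tmul]

lemma tkron_add_right (X : Matrix k k V) (Y Y' : Matrix l l W) :
    tkron X (Y + Y') = tkron X Y + tkron X Y' := by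
  ext p q
  simp [tkron, TensorProduct.tmul_add]

lemma tkron_mconj [Fintype k] [Fintype l] (a : Matrix k' k ℂ) (b : Matrix l' l ℂ)
    (X : Matrix k k V) (Y : Matrix l l W) :
    tkron (mconj a X) (mconj b Y) = mconj (a ⊗ₖ b) (tkron X Y) := by
  ext p q
  simp only [tkron, mconj, Matrix.of_apply, Matrix.kroneckerMap_apply, TensorProduct.sum_tmul,
    TensorProduct.tmul_sum, TensorProduct.smul_tmul_smul, Fintype.sum_prod_type, star_mul']
  simp only [Finset.sum_comm (γ := l) (α := k)]
  exact Finset.sum_congr rfl fun c _ => Finset.sum_congr rfl fun d _ =>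
    Finset.sum_congr rfl fun e _ => Finset.sum_congr rfl fun f _ => by ring_nf

def flatRow (M : Matrix k l ℂ) : Matrix (Fin 1) (k × l) ℂ :=
  Matrix.of fun _ c => M c.1 c.2

@[simp]
lemma flatRow_zero : flatRow (0 : Matrix k l ℂ) = 0 := by
  ext i c
  simp [flatRow]

lemma flatRow_mul_kronecker [Fintype k] [Fintype l] (M : Matrix k l ℂ) (a : Matrix k k' ℂ)
    (b : Matrix l l' ℂ) :
    flatRow M * (a ⊗ₖ b) = flatRow (aᵀ * M * b) := by
  ext i c
  simp only [flatRow, Matrix.mul_apply, Matrix.of_apply, Matrix.kroneckerMap_apply,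
    Fintype.sum_prod_type, Matrix.transpose_apply, Finset.sum_mul]
  rw [Finset.sum_comm]
  exact Finset.sum_congr rfl fun d _ => Finset.sum_congr rfl fun e _ => by ring

lemma mconj_flatRow_one_tkron [Fintype k] [DecidableEq k] (X : Matrix k k V) (Y : Matrix k k W) :
    mconj (flatRow 1) (tkron X Y) 0 0 = ∑ a, ∑ b, X a b ⊗ₜ[ℂ] Y a b := by
  simp [mconj, flatRow, tkron, Matrix.one_apply, Fintype.sum_prod_type, ite_smul]

lemma mconj_flatRow_one_tkron_add [Fintype k] [Fintype l] [Fintype k'] [DecidableEq k]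
    [DecidableEq l] [DecidableEq k']
    (a₁ : Matrix k' k ℂ) (a₂ : Matrix k' l ℂ)
    (h₁ : a₁ᵀ * a₁ = 1) (h₁₂ : a₁ᵀ * a₂ = 0) (h₂ : a₂ᵀ * a₂ = 1)
    (X₁ : Matrix k k V) (Y₁ : Matrix k k W) (X₂ : Matrix l l V) (Y₂ : Matrix l l W) :
    mconj (flatRow 1) (tkron (mconj a₁ X₁ + mconj a₂ X₂) (mconj a₁ Y₁ + mconj a₂ Y₂)) =
      mconj (flatRow 1) (tkron X₁ Y₁) + mconj (flatRow 1) (tkron X₂ Y₂) := by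
  have h₂₁ : a₂ᵀ * a₁ = 0 := by
    rw [← Matrix.transpose_transpose a₁, ← Matrix.transpose_mul, h₁₂, Matrix.transpose_zero]
  simp only [tkron_add_left, tkron_add_right, tkron_mconj, mconj_add, mconj_mconj,
    flatRow_mul_kronecker, Matrix.mul_one, h₁, h₁₂, h₂, h₂₁, flatRow_zero, zero_mconj, add_zero,
    zero_add]

end TensorConjugation

section DualCone

variable {V W : Type} [AddCommGroup V] [Module ℂ V] [AddCommGroup W] [Module ℂ W]

lemma dualPos_mconj (posV : ∀ (ι : Type) [Fintype ι] [DecidableEq ι], Set (Matrix ι ι V))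
    {ι κ : Type} [Fintype ι] [DecidableEq ι] [Fintype κ] [DecidableEq κ]
    (α : Matrix κ ι ℂ) {f : Matrix ι ι (DualV V)} (hf : f ∈ dualPos posV ι) :
    mconj α f ∈ dualPos posV κ := by
  intro m _ _ X hX
  have key : ampMat (mconj α f) X =
      ((1 : Matrix m m ℂ) ⊗ₖ α) * ampMat f X * ((1 : Matrix m m ℂ) ⊗ₖ α)ᴴ := by
    rw [← mconj_eq_mul_mul_conjTranspose]
    ext ⟨a, i⟩ ⟨b, j⟩
    simp [ampMat, mconj, Matrix.one_apply, Fintype.sum_prod_type, apply_ite (starRingEnd ℂ),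
      ite_mul, mul_ite]
  rw [key]
  exact (hf m X hX).mul_mul_conjTranspose_same _

lemma entryF_mem_dualPos (posV : ∀ (ι : Type) [Fintype ι] [DecidableEq ι], Set (Matrix ι ι V))
    {p : Type} [Fintype p] [DecidableEq p] {φ : V →ₗ[ℂ] Matrix p p ℂ}
    (hφ : ∀ (ι : Type) [Fintype ι] [DecidableEq ι], ∀ X ∈ posV ι, (blkMat φ X).PosSemidef) :
    Matrix.of (entryF φ) ∈ dualPos posV p :=
  fun m _ _ X hX => hφ m X hX

lemma posSemidef_choi_single (p : Type) [Fintype p] [DecidableEq p] :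
    (Matrix.of fun (q r : p × p) => Matrix.single q.1 r.1 (1 : ℂ) q.2 r.2).PosSemidef := by
  convert Matrix.posSemidef_vecMulVec_self_star
    (fun q : p × p => if q.1 = q.2 then (1 : ℂ) else 0) using 1
  ext ⟨a, i⟩ ⟨b, j⟩
  by_cases hai : a = i <;> by_cases hbj : b = j <;>
    simp [Matrix.single, Matrix.vecMulVec, hai, hbj, eq_comm]

lemma choi_mem_of_CPfromM {p : Type} [Fintype p] [DecidableEq p]
    {posW : ∀ (ι : Type) [Fintype ι] [DecidableEq ι], Set (Matrix ι ι W)}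
    {ψ : Matrix p p ℂ →ₗ[ℂ] W} (hψ : CPfromM posW ψ) :
    Matrix.of (fun a b => ψ (Matrix.single a b 1)) ∈ posW p :=
  hψ p _ (posSemidef_choi_single p)

lemma LinearMap.apply_eq_sum_smul_single {p : Type} [Fintype p] [DecidableEq p]
    (ψ : Matrix p p ℂ →ₗ[ℂ] W) (M : Matrix p p ℂ) :
    ψ M = ∑ a, ∑ b, M a b • ψ (Matrix.single a b 1) := by
  conv_lhs => rw [Matrix.matrix_eq_sum_single M]
  simp only [map_sum, ← map_smul, Matrix.smul_single, smul_eq_mul, mul_one]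

end DualCone

section Werner

variable {U : Type} [AddCommGroup U] [Module ℂ U]

lemma mem_wernerPos_of_fst_mem
    {posU : ∀ (ι : Type) [Fintype ι] [DecidableEq ι], Set (Matrix ι ι U)}
    {normU : ∀ (ι κ : Type) [Fintype ι] [DecidableEq ι] [Fintype κ] [DecidableEq κ],
      Matrix ι κ U → ℝ → Prop}
    {ι : Type} [Fintype ι] [DecidableEq ι]
    (hconj : ∀ Y ∈ posU ι, ∀ B : Matrix ι ι ℂ, mconj B Y ∈ posU ι)
    {X : Matrix ι ι (U × ℂ)} (hfst : X.map (LinearMap.fst ℂ U ℂ) ∈ posU ι)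
    (hsnd : (X.map (LinearMap.snd ℂ U ℂ)).PosSemidef) :
    X ∈ wernerPos posU normU ι :=
  ⟨hsnd, fun _ _ B _ _ _ hφ _ => neg_one_lt_zero.le.trans (hφ _ (hconj _ hfst B⁻¹)).1⟩

end Werner

lemma posSemidef_allOnes (κ : Type) [Fintype κ] :
    (Matrix.of fun _ _ : κ => (1 : ℂ)).PosSemidef := by
  simpa [Matrix.vecMulVec] using Matrix.posSemidef_vecMulVec_self_star (fun _ : κ => (1 : ℂ))

section Unitization

variable {V : Type} [AddCommGroup V] [Module ℂ V]

lemma mconj_map_inl_add_mconj_unit_mem_wernerPos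
    (posV : ∀ (ι : Type) [Fintype ι] [DecidableEq ι], Set (Matrix ι ι V))
    (normU : ∀ (ι κ : Type) [Fintype ι] [DecidableEq ι] [Fintype κ] [DecidableEq κ],
      Matrix ι κ (DualV V) → ℝ → Prop)
    {ι κ₁ κ₂ : Type} [Fintype ι] [DecidableEq ι] [Fintype κ₁] [DecidableEq κ₁] [Fintype κ₂]
    (a₁ : Matrix ι κ₁ ℂ) (a₂ : Matrix ι κ₂ ℂ) {F : Matrix κ₁ κ₁ (DualV V)}
    (hF : F ∈ dualPos posV κ₁) :
    mconj a₁ (F.map (LinearMap.inl ℂ (DualV V) ℂ)) +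
        mconj a₂ (Matrix.of fun _ _ => ((0 : DualV V), (1 : ℂ))) ∈
      wernerPos (dualPos posV) normU ι := by
  refine mem_wernerPos_of_fst_mem (fun Y hY B => dualPos_mconj posV B hY) ?_ ?_
  · rw [Matrix.map_add _ (map_add _), map_mconj, map_mconj, Matrix.map_map,
      show F.map (LinearMap.fst ℂ _ ℂ ∘ LinearMap.inl ℂ _ ℂ) = F from Matrix.ext fun _ _ => rfl,
      show (Matrix.of fun _ _ => ((0 : DualV V), (1 : ℂ))).map (LinearMap.fst ℂ _ ℂ) = 0 from
        Matrix.ext fun _ _ => rfl, mconj_zero, add_zero]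
    exact dualPos_mconj posV a₁ hF
  · rw [Matrix.map_add _ (map_add _), map_mconj, map_mconj, Matrix.map_map,
      show F.map (LinearMap.snd ℂ _ ℂ ∘ LinearMap.inl ℂ _ ℂ) = 0 from Matrix.ext fun _ _ => rfl,
      show (Matrix.of fun _ _ => ((0 : DualV V), (1 : ℂ))).map (LinearMap.snd ℂ _ ℂ) =
        Matrix.of fun _ _ => 1 from Matrix.ext fun _ _ => rfl, mconj_zero, zero_add]
    exact (posSemidef_allOnes κ₂).mconj a₂

end Unitization

lemma transpose_submatrix_one_mul_submatrix_one {ι κ₁ κ₂ : Type} [Fintype ι] [DecidableEq ι]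
    (e₁ : κ₁ → ι) (e₂ : κ₂ → ι) :
    ((1 : Matrix ι ι ℂ).submatrix id e₁)ᵀ * (1 : Matrix ι ι ℂ).submatrix id e₂ =
      (1 : Matrix ι ι ℂ).submatrix e₁ e₂ := by
  rw [Matrix.transpose_submatrix, Matrix.transpose_one,
    ← Matrix.submatrix_mul _ _ _ _ _ Function.bijective_id, Matrix.one_mul]

section MaxTensor

variable {V W : Type} [AddCommGroup V] [Module ℂ V]
  [AddCommGroup W] [Module ℂ W] [StarAddMonoid W] [StarModule ℂ W]

lemma smul_diagonal_unit_mem_pos (𝒯 : OpSys W) {ε : ℝ} (hε : 0 ≤ ε) (ι : Type) [Fintype ι]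
    [DecidableEq ι] : (ε : ℂ) • Matrix.diagonal (fun _ : ι => 𝒯.unit) ∈ 𝒯.pos ι := by
  have h := 𝒯.pos_conj _ _ ((Real.sqrt ε : ℂ) • (1 : Matrix ι ι ℂ)) _ (𝒯.unit_pos ι)
  rwa [mconj_smul_left, one_mconj, Complex.star_def, Complex.conj_ofReal,
    ← Complex.ofReal_mul, Real.mul_self_sqrt hε] at h

lemma map_inl_mconj_flatRow_mem_maxPos1 (𝒯 : OpSys W)
    (posV : ∀ (ι : Type) [Fintype ι] [DecidableEq ι], Set (Matrix ι ι V))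
    (normU : ∀ (ι κ : Type) [Fintype ι] [DecidableEq ι] [Fintype κ] [DecidableEq κ],
      Matrix ι κ (DualV V) → ℝ → Prop)
    {p : ℕ} {F : Matrix (Fin p) (Fin p) (DualV V)} (hF : F ∈ dualPos posV (Fin p))
    {Q : Matrix (Fin p) (Fin p) W} (hQ : Q ∈ 𝒯.pos (Fin p)) :
    TensorProduct.map (LinearMap.inl ℂ (DualV V) ℂ) LinearMap.id
        (mconj (flatRow 1) (tkron F Q) 0 0) ∈
      maxPos1 (wernerPos (dualPos posV) normU) ((0 : DualV V), (1 : ℂ)) 𝒯.pos 𝒯.unit := by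
  intro ε hε
  set a₁ := (1 : Matrix (Fin (p + 1)) (Fin (p + 1)) ℂ).submatrix id Fin.castSucc
  set a₂ := (1 : Matrix (Fin (p + 1)) (Fin (p + 1)) ℂ).submatrix id fun _ : Fin 1 => Fin.last p
  have h₁ : a₁ᵀ * a₁ = 1 := by
    rw [transpose_submatrix_one_mul_submatrix_one,
      Matrix.submatrix_one _ (Fin.castSucc_injective p)]
  have h₁₂ : a₁ᵀ * a₂ = 0 := by
    rw [transpose_submatrix_one_mul_submatrix_one]
    exact Matrix.ext fun i _ => Matrix.one_apply_ne (Fin.castSucc_lt_last i).ne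
  have h₂ : a₂ᵀ * a₂ = 1 := by
    rw [transpose_submatrix_one_mul_submatrix_one,
      Matrix.submatrix_one _ (Function.injective_of_subsingleton _)]
  refine ⟨p + 1, p + 1, _, _, flatRow 1,
    mconj_map_inl_add_mconj_unit_mem_wernerPos posV normU a₁ a₂ hF,
    𝒯.pos_add _ _ _ (𝒯.pos_conj _ _ a₁ Q hQ)
      (𝒯.pos_conj _ _ a₂ _ (smul_diagonal_unit_mem_pos 𝒯 hε.le (Fin 1))), ?_⟩
  rw [mconj_flatRow_one_tkron_add a₁ a₂ h₁ h₁₂ h₂]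
  ext i j
  obtain rfl : i = 0 := Subsingleton.elim _ _
  obtain rfl : j = 0 := Subsingleton.elim _ _
  simp [mconj_flatRow_one_tkron, map_sum, TensorProduct.tmul_smul, -Complex.coe_smul]

end MaxTensor

/-- **Remark after Theorem 5.3.** A completely positive map `Φ : S → T` factoring
through a matrix algebra `M_p` in a completely positive way corresponds to an
element of the subcone `{ α (f ⊗ Q) α* : f ∈ M_p(S*)⁺, Q ∈ M_q(T)⁺ }` of
`S* ⊗ T ∩ (S̃* ⊗_max T)⁺`. -/
theorem cp_factorization_in_subcone {V W : Type}
    [AddCommGroup V] [Module ℂ V] [StarAddMonoid V] [StarModule ℂ V]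
    [AddCommGroup W] [Module ℂ W] [StarAddMonoid W] [StarModule ℂ W]
    (𝒮 : OpSys V) (𝒯 : OpSys W) (Φ : V →ₗ[ℂ] W)
    (p : ℕ) (φ : V →ₗ[ℂ] Matrix (Fin p) (Fin p) ℂ)
    (ψ : Matrix (Fin p) (Fin p) ℂ →ₗ[ℂ] W)
    (hφ : ∀ (ι : Type) [Fintype ι] [DecidableEq ι],
      ∀ X ∈ 𝒮.pos ι, (blkMat φ X).PosSemidef)
    (hψ : CPfromM 𝒯.pos ψ)
    (hfac : ∀ x, Φ x = ψ (φ x)) :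
    ∃ z : DualV V ⊗[ℂ] W,
      (∃ (q : ℕ) (f : Fin q → DualV V) (y : Fin q → W),
        z = ∑ i, f i ⊗ₜ[ℂ] y i ∧ ∀ x, Φ x = ∑ i, f i x • y i) ∧
      (∃ (q : ℕ) (F : Matrix (Fin p) (Fin p) (DualV V))
        (Q : Matrix (Fin q) (Fin q) W) (α : Matrix (Fin 1) (Fin p × Fin q) ℂ),
        F ∈ dualPos 𝒮.pos (Fin p) ∧ Q ∈ 𝒯.pos (Fin q) ∧
        z = mconj α (tkron F Q) 0 0) ∧
      (TensorProduct.map (LinearMap.inl ℂ (DualV V) ℂ)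
          (LinearMap.id (R := ℂ) (M := W))) z ∈
        maxPos1 (wernerPos (dualPos 𝒮.pos) (dualNormLE 𝒮.normData))
          ((0 : DualV V), (1 : ℂ)) 𝒯.pos 𝒯.unit := by
  set F := Matrix.of (entryF φ)
  set Q := Matrix.of fun a b => ψ (Matrix.single a b 1)
  have hF : F ∈ dualPos 𝒮.pos (Fin p) := entryF_mem_dualPos 𝒮.pos hφ
  have hQ : Q ∈ 𝒯.pos (Fin p) := choi_mem_of_CPfromM hψ
  refine ⟨mconj (flatRow 1) (tkron F Q) 0 0, ?_, ⟨p, F, Q, flatRow 1, hF, hQ, rfl⟩,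
    map_inl_mconj_flatRow_mem_maxPos1 𝒯 𝒮.pos _ hF hQ⟩
  let e : Fin (p * p) ≃ Fin p × Fin p := finProdFinEquiv.symm
  refine ⟨p * p, fun i => F (e i).1 (e i).2, fun i => Q (e i).1 (e i).2, ?_, fun x => ?_⟩
  · rw [mconj_flatRow_one_tkron, ← Fintype.sum_prod_type']
    exact (Fintype.sum_equiv e _ _ fun _ => rfl).symm
  · rw [hfac, ψ.apply_eq_sum_smul_single, ← Fintype.sum_prod_type']
    exact (Fintype.sum_equiv e _ _ fun _ => rfl).symm
end
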